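/- arXiv:2406.18805 — 4 statements merged into one kernel-verified Lean document; each statement's English description precedes it below -/
import Mathlib

section
/- Let Y be a convex compact subset of Euclidean space, and suppose there exist a point y ∈ Y and constants α, β > 0 such that for every ŷ in the closed ball of radius α around y and every action x ∈ X, the dynamics satisfy D(x, ŷ) ∉ B_β(ŷ) (the closed ball of radius β around ŷ). Assume without loss of generality α ≤ β/2. Then, taking losses f_t(y_t) = ‖y_t − y‖, any sequence of states (y_t) generated by any choice of actions under the dynamics incurs total loss at least αT/2 over T rounds (for T even), while the fixed state y incurs total loss 0; hence every algorithm has regret Ω(T). -/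
/-- If in a ball of radius α around y the dynamics always move the state
out of the β-ball around the current state (α ≤ β/2), then with losses ‖y_t − y‖ any
trajectory incurs total loss at least αT/2 over T rounds (T even), while the fixed
state y incurs loss 0. -/
theorem stmt_0 {n : ℕ} {X : Type*} (Y : Set (EuclideanSpace ℝ (Fin n)))
    (hYconv : Convex ℝ Y) (hYcomp : IsCompact Y)
    (D : X → EuclideanSpace ℝ (Fin n) → EuclideanSpace ℝ (Fin n))
    (hD : ∀ (x : X) (z : EuclideanSpace ℝ (Fin n)), z ∈ Y → D x z ∈ Y)
    (y : EuclideanSpace ℝ (Fin n)) (hy : y ∈ Y)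
    (α β : ℝ) (hα : 0 < α) (hβ : 0 < β) (hαβ : α ≤ β / 2)
    (hsep : ∀ z ∈ Metric.closedBall y α, ∀ x : X, D x z ∉ Metric.closedBall z β)
    (T : ℕ) (hT : Even T)
    (xs : ℕ → X) (ys : ℕ → EuclideanSpace ℝ (Fin n))
    (hy0 : ys 0 ∈ Y)
    (hdyn : ∀ t : ℕ, 1 ≤ t → ys t = D (xs t) (ys (t - 1))) :
    α * T / 2 ≤ ∑ t ∈ Finset.Icc 1 T, ‖ys t - y‖ := by
  have key : ∀ t : ℕ, α ≤ ‖ys t - y‖ + ‖ys (t + 1) - y‖ := by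
    intro t
    by_cases h : ys t ∈ Metric.closedBall y α
    · have hsep' := hsep (ys t) h (xs (t + 1))
      have hd := hdyn (t + 1) (by omega)
      simp only [Nat.add_sub_cancel] at hd
      rw [← hd] at hsep'
      simp only [Metric.mem_closedBall, not_le] at hsep' h
      have h1 : dist (ys (t + 1)) y + dist (ys t) y ≥ dist (ys (t + 1)) (ys t) := by
        have := dist_triangle (ys (t + 1)) y (ys t)
        rw [dist_comm y (ys t)] at this; linarith
      have h2 : α ≤ dist (ys (t + 1)) y := by linarith
      have e1 : dist (ys t) y = ‖ys t - y‖ := by rw [dist_eq_norm]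
      have e2 : dist (ys (t + 1)) y = ‖ys (t + 1) - y‖ := by rw [dist_eq_norm]
      have : (0 : ℝ) ≤ ‖ys t - y‖ := norm_nonneg _
      linarith [e1, e2, h2]
    · simp only [Metric.mem_closedBall, not_le, dist_eq_norm] at h
      have : (0 : ℝ) ≤ ‖ys (t + 1) - y‖ := norm_nonneg _
      linarith
  obtain ⟨m, rfl⟩ := hT
  clear hsep hD hy0 hYconv hYcomp hy hdyn
  induction m with
  | zero => simp
  | succ k ih =>
    have e1 : k + 1 + (k + 1) = (k + k + 1) + 1 := by omega
    rw [e1, Finset.sum_Icc_succ_top (by omega), Finset.sum_Icc_succ_top (by omega)]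
    have hk := key (k + k + 1)
    have ecast : ((k + 1 + (k + 1) : ℕ) : ℝ) = ((k + k : ℕ) : ℝ) + 2 := by
      push_cast; ring
    push_cast
    push_cast at ih
    linarith
end

section
/- Let X and Y both be the closed unit ball in ℝⁿ, let the dynamics be D(x, y) = Π_Y(y + x) (Euclidean projection onto Y), let y_0 = 0, and let f_t(y) = ‖y − p‖² for some fixed p ≠ 0. Then for any linear policy x_t = −K y_{t−1} given by a matrix K, the induced trajectory satisfies x_t = 0 and y_t = 0 for all t, and hence the total loss exceeds that of the fixed state p by T·‖p‖² = Ω(T). -/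
/-- With X = Y the unit ball, dynamics D(x,y) = Π_Y(y+x), y₀ = 0 and losses
‖y − p‖² for fixed p ≠ 0, any linear policy x_t = −K y_{t−1} yields x_t = 0 and y_t = 0
for all t, hence total loss exceeding that of the fixed state p by T‖p‖². -/
theorem stmt_1 {n : ℕ}
    (proj : EuclideanSpace ℝ (Fin n) → EuclideanSpace ℝ (Fin n))
    (hprojmem : ∀ z, proj z ∈ Metric.closedBall (0 : EuclideanSpace ℝ (Fin n)) 1)
    (hprojmin : ∀ z, ∀ w ∈ Metric.closedBall (0 : EuclideanSpace ℝ (Fin n)) 1,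
      ‖z - proj z‖ ≤ ‖z - w‖)
    (K : Matrix (Fin n) (Fin n) ℝ)
    (p : EuclideanSpace ℝ (Fin n)) (hp : p ≠ 0)
    (xs ys : ℕ → EuclideanSpace ℝ (Fin n))
    (hy0 : ys 0 = 0)
    (hpolicy : ∀ t : ℕ, 1 ≤ t → xs t = -(Matrix.toEuclideanLin K) (ys (t - 1)))
    (hdyn : ∀ t : ℕ, 1 ≤ t → ys t = proj (ys (t - 1) + xs t))
    (T : ℕ) :
    (∀ t, ys t = 0) ∧ (∀ t : ℕ, 1 ≤ t → xs t = 0) ∧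
      (∑ t ∈ Finset.Icc 1 T, ‖ys t - p‖ ^ 2) - (∑ t ∈ Finset.Icc 1 T, ‖p - p‖ ^ 2)
        = (T : ℝ) * ‖p‖ ^ 2 := by
  have hproj0 : proj 0 = 0 := by
    have h := hprojmin 0 0 (by simp)
    simpa [neg_eq_zero, norm_le_zero_iff, eq_comm] using h
  have hys : ∀ t, ys t = 0 := by
    intro t
    induction t with
    | zero => exact hy0
    | succ k ih =>
      have h1 : 1 ≤ k + 1 := Nat.le_add_left 1 k
      have hx : xs (k + 1) = 0 := by
        rw [hpolicy (k + 1) h1]; simp [ih]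
      rw [hdyn (k + 1) h1]
      simp [hx, ih, hproj0]
  have hxs : ∀ t : ℕ, 1 ≤ t → xs t = 0 := by
    intro t ht
    rw [hpolicy t ht, hys]; simp
  refine ⟨hys, hxs, ?_⟩
  simp [hys, Nat.card_Icc]
end

section
/- (FTRL regret for Hölder-continuous convex losses) Suppose FTRL is run with step size η > 0 and a γ-strongly convex regularizer ψ with range bounded by G, on convex losses f_1,…,f_T that are (λ, β)-Hölder continuous, i.e., |f_t(y) − f_t(y')| ≤ λ‖y − y'‖^β with β ∈ (0,1]. Assume the standard FTRL guarantees: (i) Σ_t (g_t(y_t) − g_t(y_{t+1})) + G/η upper-bounds regret, where g_t(y) = ⟨∇f_t(y_t), y⟩, and (ii) g_t(y_t) − g_t(y_{t+1}) ≥ (γ/η)‖y_{t+1} − y_t‖². Then each consecutive pair of iterates satisfies ‖y_{t+1} − y_t‖ ≤ (ηλ/γ)^{1/(2−β)}, and the regret is at most T·λ·(ηλ/γ)^{β/(2−β)} + G/η. -/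
open RealInnerProductSpace

lemma grad_le {d : ℕ} {f : EuclideanSpace ℝ (Fin d) → ℝ}
    (hc : ConvexOn ℝ Set.univ f) {x : EuclideanSpace ℝ (Fin d)}
    (hd : DifferentiableAt ℝ f x) (v : EuclideanSpace ℝ (Fin d)) :
    ⟪gradient f x, v⟫ ≤ f (x + v) - f x := by
  have hgr : ⟪gradient f x, v⟫ = fderiv ℝ f x v := by
    rw [gradient, ← InnerProductSpace.toDual_apply_apply,
      (InnerProductSpace.toDual ℝ _).apply_symm_apply]
  set φ : ℝ → ℝ := fun s => f (x + s • v) with hφ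
  have hφconv : ConvexOn ℝ Set.univ φ := by
    have := hc.comp_affineMap (AffineMap.lineMap x (x + v) : ℝ →ᵃ[ℝ] _)
    simp only [Set.preimage_univ] at this
    suffices hh : φ = f ∘ ⇑(AffineMap.lineMap x (x + v) : ℝ →ᵃ[ℝ] _) by rw [hh]; exact this
    funext s
    simp [φ, AffineMap.lineMap_apply, add_sub_cancel_left]
    rw [add_comm]
  have hder : HasDerivAt φ (fderiv ℝ f x v) 0 := by
    have h1 : HasDerivAt (fun s : ℝ => x + s • v) v 0 := by
      simpa using ((hasDerivAt_id (0:ℝ)).smul_const v).const_add x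
    have := hd.hasFDerivAt
    rw [show x = x + (0:ℝ) • v by simp] at this
    have h2 := this.comp_hasDerivAt 0 h1
    simp at h2
    exact h2
  have := hφconv.le_slope_of_hasDerivAt (Set.mem_univ 0) (Set.mem_univ 1) one_pos hder
  rw [slope_def_field] at this
  simp only [φ] at this
  simp only [hgr]
  simpa using this

/-- FTRL regret for Hölder-continuous convex losses: under the standard
FTRL guarantees, (λ,β)-Hölder continuity of the convex losses yields step sizes
‖y_{t+1} − y_t‖ ≤ (ηλ/γ)^{1/(2−β)} and regret at most Tλ(ηλ/γ)^{β/(2−β)} + G/η. -/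
theorem stmt_13 {d : ℕ} (η γ G lam β : ℝ) (hη : 0 < η) (hγ : 0 < γ) (hG : 0 ≤ G)
    (hlam : 0 ≤ lam) (hβ : β ∈ Set.Ioc (0 : ℝ) 1) (T : ℕ)
    (Y : Set (EuclideanSpace ℝ (Fin d))) (hYconv : Convex ℝ Y)
    (f : ℕ → EuclideanSpace ℝ (Fin d) → ℝ) (y : ℕ → EuclideanSpace ℝ (Fin d))
    (hconv : ∀ t, ConvexOn ℝ Set.univ (f t))
    (hdiff : ∀ t, DifferentiableAt ℝ (f t) (y t))
    (hhold : ∀ t, ∀ a b : EuclideanSpace ℝ (Fin d), |f t a - f t b| ≤ lam * ‖a - b‖ ^ β)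
    (hreg : ∀ ystar ∈ Y,
      ∑ t ∈ Finset.Icc 1 T, (f t (y t) - f t ystar) ≤
        (∑ t ∈ Finset.Icc 1 T,
          (⟪gradient (f t) (y t), y t⟫ - ⟪gradient (f t) (y t), y (t + 1)⟫)) + G / η)
    (hlb : ∀ t ∈ Finset.Icc 1 T,
      γ / η * ‖y (t + 1) - y t‖ ^ 2 ≤
        ⟪gradient (f t) (y t), y t⟫ - ⟪gradient (f t) (y t), y (t + 1)⟫) :
    (∀ t ∈ Finset.Icc 1 T, ‖y (t + 1) - y t‖ ≤ (η * lam / γ) ^ ((1 : ℝ) / (2 - β))) ∧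
    (∀ ystar ∈ Y, ∑ t ∈ Finset.Icc 1 T, (f t (y t) - f t ystar) ≤
      T * lam * (η * lam / γ) ^ (β / (2 - β)) + G / η) := by
  obtain ⟨hβ0, hβ1⟩ := hβ
  have h2β : (0:ℝ) < 2 - β := by linarith
  have hA : (0:ℝ) ≤ η * lam / γ := by positivity
  -- upper bound on each g-difference
  have hub : ∀ t, ⟪gradient (f t) (y t), y t⟫ - ⟪gradient (f t) (y t), y (t + 1)⟫ ≤
      lam * ‖y (t + 1) - y t‖ ^ β := by
    intro t
    have h1 := grad_le (hconv t) (hdiff t) (y t - y (t + 1))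
    have h2 := (abs_le.mp (hhold t (y t + (y t - y (t + 1))) (y t))).2
    have h3 : ‖y t + (y t - y (t + 1)) - y t‖ = ‖y (t + 1) - y t‖ := by
      rw [add_sub_cancel_left, norm_sub_rev]
    rw [h3] at h2
    calc ⟪gradient (f t) (y t), y t⟫ - ⟪gradient (f t) (y t), y (t + 1)⟫
        = ⟪gradient (f t) (y t), y t - y (t + 1)⟫ := by rw [inner_sub_right]
      _ ≤ f t (y t + (y t - y (t + 1))) - f t (y t) := h1
      _ ≤ lam * ‖y (t + 1) - y t‖ ^ β := h2
  -- step-size bound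
  have hstep : ∀ t ∈ Finset.Icc 1 T, ‖y (t + 1) - y t‖ ≤ (η * lam / γ) ^ ((1:ℝ) / (2 - β)) := by
    intro t ht
    set r := ‖y (t + 1) - y t‖ with hr
    have hr0 : 0 ≤ r := norm_nonneg _
    rcases eq_or_lt_of_le hr0 with h0 | hpos
    · rw [← h0]; exact Real.rpow_nonneg hA _
    · have hkey : γ / η * r ^ 2 ≤ lam * r ^ β := le_trans (hlb t ht) (hub t)
      have hsplit : (r:ℝ) ^ (2:ℕ) = r ^ β * r ^ (2 - β) := by
        rw [← Real.rpow_natCast r 2, ← Real.rpow_add hpos]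
        norm_num
      have hdiv : γ / η * r ^ (2 - β) ≤ lam := by
        have hb : (0:ℝ) < r ^ β := Real.rpow_pos_of_pos hpos β
        rw [hsplit] at hkey
        have := (div_le_div_iff_of_pos_right hb).mpr hkey
        calc γ / η * r ^ (2 - β) = γ / η * (r ^ β * r ^ (2 - β)) / r ^ β := by
              field_simp
          _ ≤ lam * r ^ β / r ^ β := by
              apply div_le_div_of_nonneg_right _ hb.le
              exact hkey
          _ = lam := by field_simp
      have hle : r ^ (2 - β) ≤ η * lam / γ := by
        rw [div_mul_eq_mul_div, div_le_iff₀ hη] at hdiv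
        rw [le_div_iff₀ hγ]
        linarith [hdiv]
      calc r = (r ^ (2 - β)) ^ ((1:ℝ) / (2 - β)) := by
            rw [← Real.rpow_mul hr0, mul_one_div, div_self h2β.ne', Real.rpow_one]
        _ ≤ (η * lam / γ) ^ ((1:ℝ) / (2 - β)) :=
            Real.rpow_le_rpow (Real.rpow_nonneg hr0 _) hle (by positivity)
  refine ⟨hstep, ?_⟩
  intro ystar hy
  refine le_trans (hreg ystar hy) ?_
  gcongr
  calc ∑ t ∈ Finset.Icc 1 T, (⟪gradient (f t) (y t), y t⟫ - ⟪gradient (f t) (y t), y (t + 1)⟫)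
      ≤ ∑ t ∈ Finset.Icc 1 T, lam * (η * lam / γ) ^ (β / (2 - β)) := by
        apply Finset.sum_le_sum
        intro t ht
        refine le_trans (hub t) ?_
        have h1 : ‖y (t + 1) - y t‖ ^ β ≤ ((η * lam / γ) ^ ((1:ℝ)/(2-β))) ^ β :=
          Real.rpow_le_rpow (norm_nonneg _) (hstep t ht) hβ0.le
        have h2 : ((η * lam / γ) ^ ((1:ℝ)/(2-β))) ^ β = (η * lam / γ) ^ (β / (2 - β)) := by
          rw [← Real.rpow_mul hA]
          congr 1
          field_simp
        rw [h2] at h1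
        exact mul_le_mul_of_nonneg_left h1 hlam
    _ = T * lam * (η * lam / γ) ^ (β / (2 - β)) := by
        rw [Finset.sum_const, Nat.card_Icc]
        simp [nsmul_eq_mul]
        ring
end

section
/- Let B be an m×n real matrix whose rows' convex hull contains the closed unit ball of ℝⁿ, let θ > 0, and let Δ(n) ⊆ ℝⁿ be the probability simplex with projection Π_{Δ(n)}. Define D(x, y) = Π_{Δ(n)}(y + θ·(xᵀB)) for x ∈ Δ(m), y ∈ Δ(n). Then D is strongly θ-locally controllable: for every y ∈ Δ(n) and every y* ∈ Δ(n) with ‖y* − y‖ ≤ θ, there exists x ∈ Δ(m) with D(x, y) = y*. -/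
/-- If the convex hull of the rows of B contains the unit ball of ℝⁿ, then
the projected-gradient dynamics D(x,y) = Π_{Δ(n)}(y + θ·(xᵀB)) on the simplex are
strongly θ-locally controllable: every y* ∈ Δ(n) with ‖y* − y‖ ≤ θ is reachable from
y ∈ Δ(n) by some x ∈ Δ(m). -/
theorem stmt_19 {m n : ℕ} (θ : ℝ) (hθ : 0 < θ)
    (B : Matrix (Fin m) (Fin n) ℝ)
    (hB : Metric.closedBall (0 : EuclideanSpace ℝ (Fin n)) 1 ⊆
      convexHull ℝ {z : EuclideanSpace ℝ (Fin n) |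
        ∃ i : Fin m, z = (WithLp.equiv 2 (Fin n → ℝ)).symm (B i)})
    (Δm : Set (EuclideanSpace ℝ (Fin m))) (Δn : Set (EuclideanSpace ℝ (Fin n)))
    (hΔm : Δm = {x : EuclideanSpace ℝ (Fin m) | (∀ i, 0 ≤ x i) ∧ ∑ i, x i = 1})
    (hΔn : Δn = {y : EuclideanSpace ℝ (Fin n) | (∀ j, 0 ≤ y j) ∧ ∑ j, y j = 1})
    (proj : EuclideanSpace ℝ (Fin n) → EuclideanSpace ℝ (Fin n))
    (hprojmem : ∀ z, proj z ∈ Δn)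
    (hprojmin : ∀ z, ∀ w ∈ Δn, ‖z - proj z‖ ≤ ‖z - w‖) :
    ∀ y ∈ Δn, ∀ ystar ∈ Δn, ‖ystar - y‖ ≤ θ →
      ∃ x ∈ Δm,
        proj (y + θ • (WithLp.equiv 2 (Fin n → ℝ)).symm
          (Matrix.vecMul (fun i => x i) B)) = ystar := by
  intro y hy ystar hys hdist
  -- projection fixes points of Δn
  have hfix : ∀ z ∈ Δn, proj z = z := by
    intro z hz
    have h := hprojmin z z hz
    simp only [sub_self, norm_zero] at h
    have : ‖z - proj z‖ = 0 := le_antisymm h (norm_nonneg _)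
    have := sub_eq_zero.mp (norm_eq_zero.mp this)
    exact this.symm
  set f : Fin m → EuclideanSpace ℝ (Fin n) :=
    fun i => (WithLp.equiv 2 (Fin n → ℝ)).symm (B i) with hf
  have hrange : {z : EuclideanSpace ℝ (Fin n) |
      ∃ i : Fin m, z = (WithLp.equiv 2 (Fin n → ℝ)).symm (B i)} = Set.range f := by
    ext z; simp [hf, eq_comm]
  have hv : θ⁻¹ • (ystar - y) ∈ Metric.closedBall (0 : EuclideanSpace ℝ (Fin n)) 1 := by
    rw [Metric.mem_closedBall, dist_zero_right, norm_smul, norm_inv, Real.norm_of_nonneg hθ.le]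
    rw [inv_mul_le_one₀ hθ]
    exact hdist
  have hmem := hB hv
  rw [hrange, convexHull_range_eq_exists_affineCombination] at hmem
  obtain ⟨s, w, hw0, hw1, hcomb⟩ := hmem
  rw [Finset.affineCombination_eq_linear_combination s f w hw1] at hcomb
  set W : Fin m → ℝ := fun i => if i ∈ s then w i else 0 with hW
  have hWsum : ∑ i, W i = 1 := by
    rw [hW]; rw [Finset.sum_ite_mem, Finset.univ_inter]; exact hw1
  have hWcomb : ∑ i, W i • f i = θ⁻¹ • (ystar - y) := by
    rw [← hcomb]
    simp only [hW, ite_smul, zero_smul, Finset.sum_ite_mem, Finset.univ_inter]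
  refine ⟨(WithLp.equiv 2 (Fin m → ℝ)).symm W, ?_, ?_⟩
  · rw [hΔm]
    refine ⟨fun i => ?_, hWsum⟩
    by_cases hi : i ∈ s
    · simp [WithLp.equiv_symm_apply, PiLp.toLp_apply, hW, hi, hw0 _ hi]
    · simp [WithLp.equiv_symm_apply, PiLp.toLp_apply, hW, hi]
  · have key : (WithLp.equiv 2 (Fin n → ℝ)).symm
        (Matrix.vecMul (fun i => ((WithLp.equiv 2 (Fin m → ℝ)).symm W) i) B)
        = ∑ i, W i • f i := by
      ext j
      have : (∑ i, W i • f i) j = ∑ i, W i * B i j := by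
        rw [WithLp.ofLp_sum, Finset.sum_apply]
        rfl
      rw [this]
      simp [Matrix.vecMul, dotProduct]
    rw [key, hWcomb, smul_smul, mul_inv_cancel₀ hθ.ne', one_smul, add_sub_cancel]
    exact hfix ystar hys
end
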